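/- arXiv:1102.0224 — 3 statements merged into one kernel-verified Lean document; each statement's English description precedes it below -/
import Mathlib

section
/- Let Ω be the open rectangle of digital price vectors D = (D_1, ..., D_n) satisfying the no-arbitrage bounds given by left and right call spreads of fixed call prices C_0 > C_1 > ... > C_n > C_{n+1} = 0 at strikes 0 = K_0 < K_1 < ... < K_n. Define the entropy function H(D) = −Σ_{i=0}^n p_i ln p_i − Σ_{i=0}^n p_i c_i*(K̄_i), where p_i = D_i − D_{i+1} (with D_0 = 1, D_{n+1} = 0) and K̄_i = ((C_i + K_i D_i) − (C_{i+1} + K_{i+1} D_{i+1}))/p_i (with K_{n+1} D_{n+1} = 0). Then H is differentiable on Ω and ∂H/∂D_i = [ln p_{i−1} − c_{i−1}(β_{i−1}) + β_{i−1} K_i] − [ln p_i − c_i(β_i) + β_i K_i], where β_i is the unique solution of c_i'(β_i) = K̄_i. -/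
/-!
`-H(D)` is a sum over buckets of `p ln p + p c*(u / p)`, where `p = D_i - D_{i+1}` and
`u = (C_i + K_i D_i) - (C_{i+1} + K_{i+1} D_{i+1})` depend affinely on `D`; moving `D_i` only
changes the buckets `i - 1` and `i`. Each `c_i` is strictly convex and differentiable (it is the
log-Laplace transform of Lebesgue measure on `[K_i, K_{i+1}]`, resp. `[K_n, ∞)`), so by the
envelope theorem its Legendre transform satisfies `c*(c'(β)) = β c'(β) - c(β)` and
`(c*)'(c'(β)) = β`: by Darboux, every `y` near `c'(β)` is `c'(ξ)` for some `ξ` near `β`, and this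
`ξ` maximises `b y - c(b)`. Differentiating `p ln p + p c*(u / p)` then gives `ln p + 1 - c(β)`
per unit of `p` and `β` per unit of `u`; the two `+1`s cancel. The logarithms need `p_i > 0`:
for `i < n` it holds because the tilted mean `K̄_i = c_i'(β_i)` exceeds `K_i`, while the upper
call-spread bound on `D_{i+1}` says exactly that `u_i > K_i p_i`.
-/

open Real Set Filter Topology MeasureTheory ProbabilityTheory

noncomputable def legendreOn (g : ℝ → ℝ) (S : Set ℝ) (y : ℝ) : ℝ :=
  sSup ((fun b => b * y - g b) '' S)

section Legendre

variable {g : ℝ → ℝ} {S : Set ℝ}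

lemma legendreOn_eq_of_forall_le {y ξ : ℝ} (hξ : ξ ∈ S)
    (h : ∀ b ∈ S, b * y - g b ≤ ξ * y - g ξ) :
    legendreOn g S y = ξ * y - g ξ :=
  IsGreatest.csSup_eq ⟨mem_image_of_mem _ hξ, forall_mem_image.2 h⟩

lemma hasDerivAt_legendreOn_of_maximizers {y₀ β : ℝ} (hβ : β ∈ S)
    (hmax : ∀ b ∈ S, b * y₀ - g b ≤ β * y₀ - g β)
    (hsel : ∀ ε > 0, ∀ᶠ y in 𝓝 y₀,
      ∃ ξ ∈ S, |ξ - β| ≤ ε ∧ ∀ b ∈ S, b * y - g b ≤ ξ * y - g ξ) :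
    HasDerivAt (legendreOn g S) β y₀ := by
  rw [hasDerivAt_iff_isLittleO, Asymptotics.isLittleO_iff]
  intro ε hε
  filter_upwards [hsel ε hε] with y ⟨ξ, hξ, hξβ, hξmax⟩
  rw [legendreOn_eq_of_forall_le hξ hξmax, legendreOn_eq_of_forall_le hβ hmax, Real.norm_eq_abs,
    Real.norm_eq_abs, smul_eq_mul, abs_le]
  have hlow := hξmax β hβ
  have hup := hmax ξ hξ
  have hξ_sub : (ξ - β) * (y - y₀) ≤ ε * |y - y₀| :=
    calc (ξ - β) * (y - y₀) ≤ |ξ - β| * |y - y₀| := by rw [← abs_mul]; exact le_abs_self _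
      _ ≤ ε * |y - y₀| := by gcongr
  constructor <;> nlinarith [abs_nonneg (y - y₀)]

lemma ConvexOn.mul_sub_le_of_hasDerivAt {ξ b g' : ℝ} (hg : ConvexOn ℝ S g) (hξ : ξ ∈ S)
    (hb : b ∈ S) (hd : HasDerivAt g g' ξ) :
    b * g' - g b ≤ ξ * g' - g ξ := by
  rcases lt_trichotomy b ξ with h | rfl | h
  · have := hg.slope_le_of_hasDerivAt hb hξ h hd
    rw [slope_def_field, div_le_iff₀ (sub_pos.2 h)] at this
    linarith
  · rfl
  · have := hg.le_slope_of_hasDerivAt hξ hb h hd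
    rw [slope_def_field, le_div_iff₀ (sub_pos.2 h)] at this
    linarith

lemma ConvexOn.legendreOn_deriv {β : ℝ} (hg : ConvexOn ℝ S g) (hd : DifferentiableAt ℝ g β)
    (hβ : β ∈ S) :
    legendreOn g S (deriv g β) = β * deriv g β - g β :=
  legendreOn_eq_of_forall_le hβ fun _ hb => hg.mul_sub_le_of_hasDerivAt hβ hb hd.hasDerivAt

lemma StrictConvexOn.hasDerivAt_legendreOn_deriv {β : ℝ} (hS : IsOpen S)
    (hg : StrictConvexOn ℝ S g) (hd : ∀ x ∈ S, DifferentiableAt ℝ g x) (hβ : β ∈ S) :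
    HasDerivAt (legendreOn g S) β (deriv g β) := by
  have hmax : ∀ ξ ∈ S, ∀ b ∈ S, b * deriv g ξ - g b ≤ ξ * deriv g ξ - g ξ := fun ξ hξ b hb =>
    hg.convexOn.mul_sub_le_of_hasDerivAt hξ hb (hd ξ hξ).hasDerivAt
  refine hasDerivAt_legendreOn_of_maximizers hβ (hmax β hβ) fun ε hε => ?_
  obtain ⟨r, hr, hrS⟩ := Metric.nhds_basis_closedBall.mem_iff.1 (hS.mem_nhds hβ)
  set δ := min ε r
  have hδ : 0 < δ := lt_min hε hr
  have hIcc : Icc (β - δ) (β + δ) ⊆ S := by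
    rw [← Real.closedBall_eq_Icc]
    exact (Metric.closedBall_subset_closedBall (min_le_right ε r)).trans hrS
  have hmono := hg.strictMonoOn_deriv hd
  filter_upwards [Ioo_mem_nhds
    (hmono (hIcc ⟨le_rfl, by linarith⟩) hβ (by linarith : β - δ < β))
    (hmono hβ (hIcc ⟨by linarith, le_rfl⟩) (by linarith : β < β + δ))] with y hy
  obtain ⟨ξ, hξ, rfl⟩ := exists_hasDerivWithinAt_eq_of_gt_of_lt (by linarith)
    (fun x hx => (hd x (hIcc hx)).hasDerivAt.hasDerivWithinAt) hy.1 hy.2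
  have hξS := hIcc (Ioo_subset_Icc_self hξ)
  refine ⟨ξ, hξS, abs_le.2 ⟨?_, ?_⟩, hmax ξ hξS⟩ <;> linarith [hξ.1, hξ.2, min_le_left ε r]

end Legendre

section LogIntegralExp

variable {a d : ℝ}

lemma integrableExpSet_id_restrict_Ioc :
    integrableExpSet id (volume.restrict (Ioc a d)) = univ :=
  eq_univ_of_forall fun _ =>
    (continuous_exp.comp (continuous_const.mul continuous_id)).integrableOn_Icc.mono_set
      Ioc_subset_Icc_self

lemma log_integral_exp_eq_cgf (had : a ≤ d) :
    (fun b => log (∫ x in a..d, exp (b * x))) = cgf id (volume.restrict (Ioc a d)) := by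
  ext b
  simp [cgf, mgf, intervalIntegral.integral_of_le had]

lemma differentiable_log_integral_exp (had : a ≤ d) :
    Differentiable ℝ fun b => log (∫ x in a..d, exp (b * x)) := fun b => by
  rw [log_integral_exp_eq_cgf had]
  exact (analyticAt_cgf (by simp [integrableExpSet_id_restrict_Ioc])).differentiableAt

lemma deriv_log_integral_exp (had : a ≤ d) (b : ℝ) :
    deriv (fun b => log (∫ x in a..d, exp (b * x))) b =
      (∫ x in a..d, x * exp (b * x)) / ∫ x in a..d, exp (b * x) := by
  rw [log_integral_exp_eq_cgf had, deriv_cgf (by simp [integrableExpSet_id_restrict_Ioc])]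
  simp [mgf, intervalIntegral.integral_of_le had]

lemma iteratedDeriv_two_log_integral_exp (had : a ≤ d) (b : ℝ) :
    iteratedDeriv 2 (fun b => log (∫ x in a..d, exp (b * x))) b =
      (∫ x in a..d, (x - deriv (fun b => log (∫ x in a..d, exp (b * x))) b) ^ 2 * exp (b * x)) /
        ∫ x in a..d, exp (b * x) := by
  rw [log_integral_exp_eq_cgf had,
    iteratedDeriv_two_cgf_eq_integral (by simp [integrableExpSet_id_restrict_Ioc])]
  simp [mgf, intervalIntegral.integral_of_le had]

lemma integral_exp_mul_pos (had : a < d) (b : ℝ) : 0 < ∫ x in a..d, exp (b * x) :=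
  intervalIntegral.intervalIntegral_pos_of_pos
    ((continuous_exp.comp (continuous_const.mul continuous_id)).intervalIntegrable a d)
    (fun _ => exp_pos _) had

lemma strictConvexOn_log_integral_exp (had : a < d) :
    StrictConvexOn ℝ univ fun b => log (∫ x in a..d, exp (b * x)) := by
  refine strictConvexOn_univ_of_deriv2_pos (differentiable_log_integral_exp had.le).continuous
    fun b => ?_
  rw [← iteratedDeriv_eq_iterate, iteratedDeriv_two_log_integral_exp had.le]
  refine div_pos (intervalIntegral.integral_pos had (by fun_prop) (fun x _ => by positivity) ?_)
    (integral_exp_mul_pos had b)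
  set m := deriv (fun b => log (∫ x in a..d, exp (b * x))) b
  obtain hm | hm := eq_or_ne m a
  · exact ⟨d, right_mem_Icc.2 had.le, by rw [hm]; have := sub_pos.2 had; positivity⟩
  · exact ⟨a, left_mem_Icc.2 had.le, by have := sub_ne_zero.2 hm.symm; positivity⟩

lemma lt_deriv_log_integral_exp (had : a < d) (b : ℝ) :
    a < deriv (fun b => log (∫ x in a..d, exp (b * x))) b := by
  rw [deriv_log_integral_exp had.le, lt_div_iff₀ (integral_exp_mul_pos had b),
    ← intervalIntegral.integral_const_mul]
  refine intervalIntegral.integral_lt_integral_of_continuousOn_of_le_of_exists_lt had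
    (by fun_prop) (by fun_prop) (fun x hx => ?_) ⟨d, right_mem_Icc.2 had.le, ?_⟩
  · exact mul_le_mul_of_nonneg_right hx.1.le (exp_pos _).le
  · exact mul_lt_mul_of_pos_right had (exp_pos _)

lemma legendre_deriv_of_log_integral_exp (had : a < d) {c cstar : ℝ → ℝ}
    (hc : ∀ b, c b = log (∫ x in a..d, exp (b * x)))
    (hcstar : ∀ y, cstar y = sSup (range fun b => b * y - c b)) (β : ℝ) :
    cstar (deriv c β) = β * deriv c β - c β ∧ HasDerivAt cstar β (deriv c β) := by
  obtain rfl : c = _ := funext hc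
  obtain rfl : cstar = legendreOn _ univ := funext fun y => by rw [hcstar, ← image_univ]; rfl
  have hconv := strictConvexOn_log_integral_exp had
  have hd := differentiable_log_integral_exp had.le
  exact ⟨hconv.convexOn.legendreOn_deriv (hd β) (mem_univ β),
    hconv.hasDerivAt_legendreOn_deriv isOpen_univ (fun b _ => hd b) (mem_univ β)⟩

end LogIntegralExp

section LogExpMulDivNeg

lemma strictConvexOn_log_exp_mul_div_neg (K : ℝ) :
    StrictConvexOn ℝ (Iio 0) fun b => log (exp (b * K) / -b) := by
  refine (((LinearMap.id : ℝ →ₗ[ℝ] ℝ).smulRight K).convexOn (convex_Iio 0)).add_strictConvexOn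
    strictConcaveOn_log_Iio.neg |>.congr fun b (hb : b < 0) => ?_
  simp [log_div (exp_ne_zero _) (neg_ne_zero.2 hb.ne), log_neg_eq_log, sub_eq_add_neg]

lemma differentiableAt_log_exp_mul_div_neg (K : ℝ) {b : ℝ} (hb : b ≠ 0) :
    DifferentiableAt ℝ (fun b => log (exp (b * K) / -b)) b :=
  ((by fun_prop : DifferentiableAt ℝ (fun b => exp (b * K)) b).div (by fun_prop)
    (neg_ne_zero.2 hb)).log (div_ne_zero (exp_ne_zero _) (neg_ne_zero.2 hb))

lemma legendre_deriv_of_log_exp_mul_div_neg {K : ℝ} {c cstar : ℝ → ℝ}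
    (hc : ∀ b < 0, c b = log (exp (b * K) / -b))
    (hcstar : ∀ y, cstar y = sSup ((fun b => b * y - c b) '' Iio 0)) {β : ℝ} (hβ : β < 0) :
    cstar (deriv c β) = β * deriv c β - c β ∧ HasDerivAt cstar β (deriv c β) := by
  obtain rfl : cstar = legendreOn c (Iio 0) := funext hcstar
  have hconv := (strictConvexOn_log_exp_mul_div_neg K).congr fun b hb => (hc b hb).symm
  have hd : ∀ b ∈ Iio (0 : ℝ), DifferentiableAt ℝ c b := fun b hb =>
    (differentiableAt_log_exp_mul_div_neg K hb.ne).congr_of_eventuallyEq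
      (eventually_of_mem (Iio_mem_nhds hb) hc)
  exact ⟨hconv.convexOn.legendreOn_deriv (hd β hβ) hβ,
    hconv.hasDerivAt_legendreOn_deriv isOpen_Iio hd hβ⟩

end LogExpMulDivNeg

lemma hasDerivAt_mul_log_add_mul_comp_div {g q u : ℝ → ℝ} {q' u' β t : ℝ}
    (hq : HasDerivAt q q' t) (hu : HasDerivAt u u' t) (hq0 : q t ≠ 0)
    (hg : HasDerivAt g β (u t / q t)) :
    HasDerivAt (fun s => q s * log (q s) + q s * g (u s / q s))
      (q' * (log (q t) + 1 + g (u t / q t) - β * (u t / q t)) + β * u') t := by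
  refine (((hasDerivAt_mul_log hq0).comp t hq).add
    (hq.mul (hg.comp t (hu.div hq hq0)))).congr_deriv ?_
  simp only [Function.comp_apply, Pi.div_apply]
  field_simp
  ring

/-- The term `p ln p + p g(K̄)` of one bucket in `-H`, as a function of its two digital prices
`x = D_i` and `y = D_{i+1}`: `p = x - y` and `K̄ = ((C₀ + K₀ x) - (C₁ + K₁ y)) / p`. -/
noncomputable def bucketTerm (g : ℝ → ℝ) (C₀ K₀ C₁ K₁ x y : ℝ) : ℝ :=
  (x - y) * log (x - y) + (x - y) * g ((C₀ + K₀ * x - (C₁ + K₁ * y)) / (x - y))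

section BucketTerm

variable {g : ℝ → ℝ} {C₀ K₀ C₁ K₁ x y m β : ℝ}

lemma hasDerivAt_bucketTerm_fst (hxy : x - y ≠ 0)
    (hm : (C₀ + K₀ * x - (C₁ + K₁ * y)) / (x - y) = m) (hg : HasDerivAt g β m) :
    HasDerivAt (fun t => bucketTerm g C₀ K₀ C₁ K₁ t y)
      (log (x - y) + 1 + g m - β * m + β * K₀) x := by
  refine (hasDerivAt_mul_log_add_mul_comp_div (q := fun t => t - y)
    (u := fun t => C₀ + K₀ * t - (C₁ + K₁ * y)) ((hasDerivAt_id' x).sub_const y)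
    ((((hasDerivAt_id' x).const_mul K₀).const_add C₀).sub_const _) hxy (hm ▸ hg)).congr_deriv ?_
  rw [hm]
  ring

lemma hasDerivAt_bucketTerm_snd (hxy : x - y ≠ 0)
    (hm : (C₀ + K₀ * x - (C₁ + K₁ * y)) / (x - y) = m) (hg : HasDerivAt g β m) :
    HasDerivAt (fun t => bucketTerm g C₀ K₀ C₁ K₁ x t)
      (-(log (x - y) + 1 + g m - β * m) - β * K₁) y := by
  refine (hasDerivAt_mul_log_add_mul_comp_div (q := fun t => x - t)
    (u := fun t => C₀ + K₀ * x - (C₁ + K₁ * t)) ((hasDerivAt_id' y).const_sub x)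
    ((((hasDerivAt_id' y).const_mul K₁).const_add C₁).const_sub _) hxy (hm ▸ hg)).congr_deriv ?_
  rw [hm]
  ring

end BucketTerm

lemma hasDerivAt_sum_range_update {Φ : ℕ → ℝ → ℝ → ℝ} {E : ℕ → ℝ} {N k : ℕ} {a b : ℝ}
    (hk : k + 1 < N) (hl : HasDerivAt (Φ k (E k)) a (E (k + 1)))
    (hr : HasDerivAt (fun t => Φ (k + 1) t (E (k + 2))) b (E (k + 1))) :
    HasDerivAt (fun t => ∑ j ∈ Finset.range N,
        Φ j (Function.update E (k + 1) t j) (Function.update E (k + 1) t (j + 1)))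
      (a + b) (E (k + 1)) := by
  have hsplit : ∀ t, ∑ j ∈ Finset.range N,
      Φ j (Function.update E (k + 1) t j) (Function.update E (k + 1) t (j + 1)) =
        Φ k (E k) t + (Φ (k + 1) t (E (k + 2)) +
          ∑ j ∈ ((Finset.range N).erase k).erase (k + 1), Φ j (E j) (E (j + 1))) := by
    intro t
    rw [← Finset.add_sum_erase _ _ (Finset.mem_range.2 (by omega : k < N)),
      ← Finset.add_sum_erase _ _ (Finset.mem_erase.2 ⟨by omega, Finset.mem_range.2 hk⟩)]
    refine congr_arg₂ _ (by simp) (congr_arg₂ _ (by simp) (Finset.sum_congr rfl fun j hj => ?_))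
    obtain ⟨hj1, hj0, -⟩ : j ≠ k + 1 ∧ j ≠ k ∧ j < N := by simpa using hj
    rw [Function.update_of_ne hj1, Function.update_of_ne (by omega)]
  rw [funext hsplit]
  exact hl.add (hr.add_const _)

lemma sub_pos_of_lt_bucket_mean {C₀ K₀ C₁ K₁ D₀ D₁ : ℝ} (hK₀ : 0 ≤ K₀) (hK : K₀ < K₁)
    (hup : D₁ < -((C₁ - C₀) / (K₁ - K₀)))
    (hmean : K₀ < (C₀ + K₀ * D₀ - (C₁ + K₁ * D₁)) / (D₀ - D₁)) : 0 < D₀ - D₁ := by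
  rw [← neg_div, lt_div_iff₀ (sub_pos.2 hK)] at hup
  rcases lt_trichotomy (D₀ - D₁) 0 with hp | hp | hp
  · linarith [(lt_div_iff_of_neg hp).1 hmean]
  · rw [hp, div_zero] at hmean
    linarith
  · exact hp

theorem stmt_10_general (n : ℕ)
    (K : ℕ → ℝ) (hK0 : K 0 = 0) (hKmono : ∀ i < n, K i < K (i + 1))
    (C : ℕ → ℝ)
    -- the functions c_i and their Legendre transforms c_i*
    (c : ℕ → ℝ → ℝ)
    (hc : ∀ i < n, ∀ b : ℝ, c i b = Real.log (∫ x in K i..K (i + 1), Real.exp (b * x)))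
    (hcn : ∀ b : ℝ, b < 0 → c n b = Real.log (Real.exp (b * K n) / (-b)))
    (cstar : ℕ → ℝ → ℝ)
    (hcstar : ∀ i < n, ∀ y : ℝ, cstar i y = sSup (Set.range fun b => b * y - c i b))
    (hcstarn : ∀ y : ℝ, cstar n y = sSup ((fun b => b * y - c n b) '' Set.Iio 0))
    -- the entropy function H expressed in terms of market data
    (H : (ℕ → ℝ) → ℝ)
    (hH : ∀ E : ℕ → ℝ, E 0 = 1 → E (n + 1) = 0 →
      H E = -(∑ i ∈ Finset.range (n + 1),
              (E i - E (i + 1)) * Real.log (E i - E (i + 1))) -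
            ∑ i ∈ Finset.range (n + 1),
              (E i - E (i + 1)) *
                cstar i (((C i + K i * E i) - (C (i + 1) + K (i + 1) * E (i + 1))) /
                  (E i - E (i + 1))))
    -- a point D in the open rectangle Ω of arbitrage-free digital prices
    (D : ℕ → ℝ) (hD0 : D 0 = 1) (hDlast : D (n + 1) = 0)
    (hΩlown : 0 < D n)
    (hΩup : ∀ i, 1 ≤ i → i ≤ n → D i < -((C i - C (i - 1)) / (K i - K (i - 1))))
    -- bucket probabilities, conditional means, and the exponents β_i at D
    (p Kbar : ℕ → ℝ)
    (hp : ∀ i ≤ n, p i = D i - D (i + 1))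
    (hKbar : ∀ i ≤ n,
      Kbar i = ((C i + K i * D i) - (C (i + 1) + K (i + 1) * D (i + 1))) / p i)
    (β : ℕ → ℝ) (hβ : ∀ i ≤ n, deriv (c i) (β i) = Kbar i) (hβn : β n < 0) :
    ∀ i, 1 ≤ i → i ≤ n →
      deriv (fun t => H (Function.update D i t)) (D i) =
        (Real.log (p (i - 1)) - c (i - 1) (β (i - 1)) + β (i - 1) * K i) -
          (Real.log (p i) - c i (β i) + β i * K i) := by
  intro i hi hin
  obtain ⟨k, rfl⟩ := Nat.exists_eq_add_of_le' hi
  rw [Nat.add_sub_cancel]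
  have hconj : ∀ j ≤ n,
      cstar j (Kbar j) = β j * Kbar j - c j (β j) ∧ HasDerivAt (cstar j) (β j) (Kbar j) := by
    intro j hj
    rw [← hβ j hj]
    rcases hj.lt_or_eq with hj | rfl
    · exact legendre_deriv_of_log_integral_exp (hKmono j hj) (hc j hj) (hcstar j hj) _
    · exact legendre_deriv_of_log_exp_mul_div_neg hcn hcstarn hβn
  have hKnn : ∀ j ≤ n, 0 ≤ K j := fun j hj =>
    hK0 ▸ (strictMonoOn_Iic_of_lt_succ hKmono).monotoneOn (Nat.zero_le n) hj (Nat.zero_le j)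
  have hpos : ∀ j ≤ n, 0 < D j - D (j + 1) := by
    intro j hj
    rcases hj.lt_or_eq with hj | rfl
    · refine sub_pos_of_lt_bucket_mean (hKnn j hj.le) (hKmono j hj)
        (by simpa only [Nat.add_sub_cancel] using hΩup (j + 1) (by omega) (by omega)) ?_
      rw [← hp j hj.le, ← hKbar j hj.le, ← hβ j hj.le, funext (hc j hj)]
      exact lt_deriv_log_integral_exp (hKmono j hj) _
    · rw [hDlast, sub_zero]
      exact hΩlown
  have hHΦ : ∀ t, H (Function.update D (k + 1) t) = -∑ j ∈ Finset.range (n + 1),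
      bucketTerm (cstar j) (C j) (K j) (C (j + 1)) (K (j + 1))
        (Function.update D (k + 1) t j) (Function.update D (k + 1) t (j + 1)) := fun t => by
    rw [hH _ (by rw [Function.update_of_ne (by omega), hD0])
      (by rw [Function.update_of_ne (by omega), hDlast]), ← neg_add', ← Finset.sum_add_distrib]
    rfl
  have hl : HasDerivAt (fun t => bucketTerm (cstar k) (C k) (K k) (C (k + 1)) (K (k + 1)) (D k) t)
      _ (D (k + 1)) := hasDerivAt_bucketTerm_snd (hpos k (by omega)).ne'
    (by rw [← hp k (by omega), ← hKbar k (by omega)]) (hconj k (by omega)).2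
  have hr : HasDerivAt (fun t =>
      bucketTerm (cstar (k + 1)) (C (k + 1)) (K (k + 1)) (C (k + 2)) (K (k + 2)) t (D (k + 2)))
      _ (D (k + 1)) := hasDerivAt_bucketTerm_fst (hpos (k + 1) hin).ne'
    (by rw [← hp (k + 1) hin, ← hKbar (k + 1) hin]) (hconj (k + 1) hin).2
  rw [funext hHΦ, ((hasDerivAt_sum_range_update (by omega) hl hr).fun_neg).deriv,
    (hconj k (by omega)).1, (hconj (k + 1) hin).1, ← hp k (by omega), ← hp (k + 1) hin]
  ring

/-- Sensitivity of the maximum entropy `H` with respect to digital prices: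
`∂H/∂D_i = [ln p_{i-1} - c_{i-1}(β_{i-1}) + β_{i-1} K_i] - [ln p_i - c_i(β_i) + β_i K_i]`,
i.e. `∂H/∂D_i = ln g_D(K_i-) - ln g_D(K_i+)`. -/
theorem stmt_10 (n : ℕ) (hn : 1 ≤ n)
    (K : ℕ → ℝ) (hK0 : K 0 = 0) (hKmono : ∀ i < n, K i < K (i + 1))
    (C : ℕ → ℝ) (hCdec : ∀ i ≤ n, C (i + 1) < C i) (hClast : C (n + 1) = 0)
    -- the functions c_i and their Legendre transforms c_i*
    (c : ℕ → ℝ → ℝ)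
    (hc : ∀ i < n, ∀ b : ℝ, c i b = Real.log (∫ x in K i..K (i + 1), Real.exp (b * x)))
    (hcn : ∀ b : ℝ, b < 0 → c n b = Real.log (Real.exp (b * K n) / (-b)))
    (cstar : ℕ → ℝ → ℝ)
    (hcstar : ∀ i < n, ∀ y : ℝ, cstar i y = sSup (Set.range fun b => b * y - c i b))
    (hcstarn : ∀ y : ℝ, cstar n y = sSup ((fun b => b * y - c n b) '' Set.Iio 0))
    -- the entropy function H expressed in terms of market data
    (H : (ℕ → ℝ) → ℝ)
    (hH : ∀ E : ℕ → ℝ, E 0 = 1 → E (n + 1) = 0 →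
      H E = -(∑ i ∈ Finset.range (n + 1),
              (E i - E (i + 1)) * Real.log (E i - E (i + 1))) -
            ∑ i ∈ Finset.range (n + 1),
              (E i - E (i + 1)) *
                cstar i (((C i + K i * E i) - (C (i + 1) + K (i + 1) * E (i + 1))) /
                  (E i - E (i + 1))))
    -- a point D in the open rectangle Ω of arbitrage-free digital prices
    (D : ℕ → ℝ) (hD0 : D 0 = 1) (hDlast : D (n + 1) = 0)
    (hΩlow : ∀ i, 1 ≤ i → i < n → -((C (i + 1) - C i) / (K (i + 1) - K i)) < D i)
    (hΩlown : 0 < D n)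
    (hΩup : ∀ i, 1 ≤ i → i ≤ n → D i < -((C i - C (i - 1)) / (K i - K (i - 1))))
    -- bucket probabilities, conditional means, and the exponents β_i at D
    (p Kbar : ℕ → ℝ)
    (hp : ∀ i ≤ n, p i = D i - D (i + 1))
    (hKbar : ∀ i ≤ n,
      Kbar i = ((C i + K i * D i) - (C (i + 1) + K (i + 1) * D (i + 1))) / p i)
    (β : ℕ → ℝ) (hβ : ∀ i ≤ n, deriv (c i) (β i) = Kbar i) (hβn : β n < 0) :
    ∀ i, 1 ≤ i → i ≤ n →
      deriv (fun t => H (Function.update D i t)) (D i) =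
        (Real.log (p (i - 1)) - c (i - 1) (β (i - 1)) + β (i - 1) * K i) -
          (Real.log (p i) - c i (β i) + β i * K i) :=
  stmt_10_general n K hK0 hKmono C c hc hcn cstar hcstar hcstarn H hH D hD0 hDlast hΩlown hΩup p
    Kbar hp hKbar β hβ hβn
end

section
/- Suppose p_0, ..., p_n ∈ (0, 1] and A is the n×n symmetric tridiagonal matrix with ⟨A d, d⟩ = d_1²/p_0 + Σ_{i=1}^{n−1} (d_i − d_{i+1})²/p_i + d_n²/p_n. Then ⟨A d, d⟩ ≥ 4 sin²(π/(2n+2)) ‖d‖² for all d ∈ ℝⁿ. -/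
/-!
Since every `p i ≤ 1`, the weights only enlarge the form, so it suffices to bound the
unweighted Dirichlet form of the path `1, …, n`. This is done by a ground-state substitution:
if `φ > 0` on `1, …, n`, `φ 0, φ (n + 1) ≥ 0` and `φ (i - 1) + φ (i + 1) ≤ c φ i`, then
applying Picone's two-point inequality `(1 - b/a) x² + (1 - a/b) y² ≤ (x - y)²` with
`a, b = φ i, φ (i + 1)` on every edge and summing gives `(2 - c) ‖d‖² ≤` the form. The
Dirichlet eigenvector `φ i = sin (i π / (n + 1))` does this with `c = 2 cos (π / (n + 1))`,
and `2 - 2 cos θ = 4 sin² (θ / 2)`.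
-/

open Finset Real

theorem Finset.sum_Icc_succ_eq_add_sum_shift {M : Type*} [AddCommMonoid M] {a b : ℕ}
    (hab : a ≤ b + 1) (g : ℕ → M) :
    ∑ i ∈ Icc a (b + 1), g i = g a + ∑ i ∈ Icc a b, g (i + 1) := by
  rw [← insert_Icc_add_one_left_eq_Icc hab, sum_insert (by simp), ← map_add_right_Icc, sum_map]
  rfl

theorem picone_two_point {a b : ℝ} (ha : 0 < a) (hb : 0 < b) (x y : ℝ) :
    (1 - b / a) * x ^ 2 + (1 - a / b) * y ^ 2 ≤ (x - y) ^ 2 := by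
  have key : (1 - b / a) * x ^ 2 + (1 - a / b) * y ^ 2
      = (x - y) ^ 2 - (b * x - a * y) ^ 2 / (a * b) := by
    field_simp
    ring
  rw [key, sub_le_self_iff]
  positivity

theorem mul_sum_sq_le_path_energy_of_supersolution {m : ℕ} {φ : ℕ → ℝ} {c : ℝ}
    (hpos : ∀ i ∈ Icc 1 (m + 1), 0 < φ i) (hbot : 0 ≤ φ 0) (htop : 0 ≤ φ (m + 2))
    (hsuper : ∀ i ∈ Icc 1 (m + 1), φ (i - 1) + φ (i + 1) ≤ c * φ i) (d : ℕ → ℝ) :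
    (2 - c) * ∑ i ∈ Icc 1 (m + 1), d i ^ 2 ≤
      d 1 ^ 2 + ∑ i ∈ Icc 1 m, (d i - d (i + 1)) ^ 2 + d (m + 1) ^ 2 := by
  set f : ℕ → ℝ := fun i => (1 - φ (i + 1) / φ i) * d i ^ 2
  set g : ℕ → ℝ := fun i => (1 - φ (i - 1) / φ i) * d i ^ 2
  calc (2 - c) * ∑ i ∈ Icc 1 (m + 1), d i ^ 2
      ≤ ∑ i ∈ Icc 1 (m + 1), (f i + g i) := by
        rw [mul_sum]
        refine sum_le_sum fun i hi => ?_
        have hcoef : 2 - c ≤ (1 - φ (i + 1) / φ i) + (1 - φ (i - 1) / φ i) := by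
          have hgap : 0 ≤ (c * φ i - (φ (i - 1) + φ (i + 1))) / φ i :=
            div_nonneg (sub_nonneg.2 (hsuper i hi)) (hpos i hi).le
          rw [← sub_nonneg]
          convert hgap using 1
          field_simp [(hpos i hi).ne']
          ring
        simpa only [f, g, add_mul] using mul_le_mul_of_nonneg_right hcoef (sq_nonneg (d i))
    _ = (∑ i ∈ Icc 1 m, f i + f (m + 1)) + (g 1 + ∑ i ∈ Icc 1 m, g (i + 1)) := by
        rw [sum_add_distrib, sum_Icc_succ_top (by omega), sum_Icc_succ_eq_add_sum_shift (by omega)]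
    _ ≤ (∑ i ∈ Icc 1 m, f i + d (m + 1) ^ 2) + (d 1 ^ 2 + ∑ i ∈ Icc 1 m, g (i + 1)) := by
        gcongr
        · exact mul_le_of_le_one_left (sq_nonneg _)
            (sub_le_self _ (div_nonneg htop (hpos (m + 1) (by simp)).le))
        · exact mul_le_of_le_one_left (sq_nonneg _)
            (sub_le_self _ (div_nonneg hbot (hpos 1 (by simp)).le))
    _ = d 1 ^ 2 + ∑ i ∈ Icc 1 m, (f i + g (i + 1)) + d (m + 1) ^ 2 := by
        rw [sum_add_distrib]
        ring
    _ ≤ d 1 ^ 2 + ∑ i ∈ Icc 1 m, (d i - d (i + 1)) ^ 2 + d (m + 1) ^ 2 := by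
        gcongr with i hi
        rw [mem_Icc] at hi
        simpa only [f, g, Nat.add_sub_cancel] using picone_two_point
          (hpos i (by rw [mem_Icc]; omega)) (hpos (i + 1) (by rw [mem_Icc]; omega)) (d i) (d (i + 1))

theorem sin_pi_div_mul_pos {N i : ℕ} (hi0 : 0 < i) (hiN : i < N) : 0 < sin (i * (π / N)) := by
  have hi0' : (0 : ℝ) < i := by exact_mod_cast hi0
  have hiN' : (i : ℝ) < N := by exact_mod_cast hiN
  apply sin_pos_of_pos_of_lt_pi (mul_pos hi0' (div_pos pi_pos (hi0'.trans hiN')))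
  rw [mul_div_assoc', div_lt_iff₀ (hi0'.trans hiN'), mul_comm π]
  exact mul_lt_mul_of_pos_right hiN' pi_pos

theorem sin_sub_add_sin_add (x θ : ℝ) : sin (x - θ) + sin (x + θ) = 2 * cos θ * sin x := by
  rw [← two_mul_sin_mul_cos]
  ring

theorem four_mul_sin_sq_half (θ : ℝ) : 4 * sin (θ / 2) ^ 2 = 2 - 2 * cos θ := by
  rw [sin_sq_eq_half_sub, mul_div_cancel₀ _ two_ne_zero]
  ring

theorem two_sub_two_cos_mul_sum_sq_le_path_energy (m : ℕ) (d : ℕ → ℝ) :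
    (2 - 2 * cos (π / (m + 2 : ℕ))) * ∑ i ∈ Icc 1 (m + 1), d i ^ 2 ≤
      d 1 ^ 2 + ∑ i ∈ Icc 1 m, (d i - d (i + 1)) ^ 2 + d (m + 1) ^ 2 := by
  set θ := π / (m + 2 : ℕ)
  refine mul_sum_sq_le_path_energy_of_supersolution (φ := fun i => sin (i * θ)) ?_ ?_ ?_ ?_ d
  · intro i hi
    rw [mem_Icc] at hi
    exact sin_pi_div_mul_pos (by omega) (by omega)
  · simp
  · show 0 ≤ sin (((m + 2 : ℕ) : ℝ) * (π / (m + 2 : ℕ)))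
    rw [mul_div_cancel₀ _ (by positivity), sin_pi]
  · intro i hi
    rw [mem_Icc] at hi
    push_cast [Nat.cast_sub hi.1]
    rw [sub_mul, add_mul, one_mul, sin_sub_add_sin_add]

/-- If `p_0, ..., p_n ∈ (0, 1]`, the quadratic form
`d_1²/p_0 + Σ_{i=1}^{n-1} (d_i - d_{i+1})²/p_i + d_n²/p_n` is bounded below by
`4 sin²(π/(2n+2)) ‖d‖²`. -/
theorem stmt_15 (n : ℕ) (hn : 0 < n) (p : ℕ → ℝ)
    (hp : ∀ i ≤ n, 0 < p i ∧ p i ≤ 1) :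
    ∀ d : ℕ → ℝ,
      4 * Real.sin (Real.pi / (2 * n + 2)) ^ 2 * ∑ i ∈ Finset.Icc 1 n, d i ^ 2 ≤
        d 1 ^ 2 / p 0 + (∑ i ∈ Finset.Icc 1 (n - 1), (d i - d (i + 1)) ^ 2 / p i) +
          d n ^ 2 / p n := by
  intro d
  obtain ⟨m, rfl⟩ : ∃ m, n = m + 1 := ⟨n - 1, by omega⟩
  have hweight : ∀ i ≤ m + 1, ∀ x : ℝ, x ^ 2 ≤ x ^ 2 / p i := fun i hi x =>
    le_div_self (sq_nonneg x) (hp i hi).1 (hp i hi).2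
  have hangle : π / (2 * ((m + 1 : ℕ) : ℝ) + 2) = π / (m + 2 : ℕ) / 2 := by
    push_cast
    rw [div_div]
    ring_nf
  calc 4 * sin (π / (2 * ((m + 1 : ℕ) : ℝ) + 2)) ^ 2 * ∑ i ∈ Icc 1 (m + 1), d i ^ 2
      = (2 - 2 * cos (π / (m + 2 : ℕ))) * ∑ i ∈ Icc 1 (m + 1), d i ^ 2 := by
        rw [hangle, four_mul_sin_sq_half]
    _ ≤ d 1 ^ 2 + ∑ i ∈ Icc 1 m, (d i - d (i + 1)) ^ 2 + d (m + 1) ^ 2 :=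
        two_sub_two_cos_mul_sum_sq_le_path_energy m d
    _ ≤ _ := by
        rw [Nat.add_sub_cancel]
        gcongr ?_ + ∑ i ∈ _, ?_ + ?_ with i hi
        · exact hweight 0 (by omega) _
        · exact hweight i (by rw [mem_Icc] at hi; omega) _
        · exact hweight _ le_rfl _
end

section
/- Let ĝ(x) = μ^{−1} exp(Σ_{i=0}^n λ_i (x − K_i)^+) be a Buchen–Kelly density on [0, ∞) and let g be any strictly positive density on [0, ∞) matching the same call prices, i.e. ∫_0^∞ (x − K_i)^+ g(x) dx = ∫_0^∞ (x − K_i)^+ ĝ(x) dx = C_i for all i = 0, ..., n. Then the relative entropy satisfies I(g‖ĝ) = H(ĝ) − H(g), where H(f) = −∫_0^∞ f ln f dx denotes differential entropy and I(g‖ĝ) = ∫_0^∞ g ln(g/ĝ) dx. -/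
/-!
Since `∑ λᵢ < 0`, the exponent `∑ λᵢ (x - Kᵢ)⁺` is bounded above by `(∑ λᵢ) x + C` on `[0, ∞)`,
so `μ` is finite and positive and `ĝ` is a probability density. Now
`log ĝ = -log μ + ∑ λᵢ (x - Kᵢ)⁺` is a combination of the constant `1` and the call payoffs, so
`∫ g log ĝ` depends only on the mass and the call prices of `g`. These agree with those of `ĝ`,
hence `∫ g log ĝ = ∫ ĝ log ĝ = -H(ĝ)`, and `I(g‖ĝ) = ∫ g log g - ∫ g log ĝ = H(ĝ) - H(g)`.
-/

open MeasureTheory Real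

namespace BuchenKelly

def exponent (n : ℕ) (K lam : ℕ → ℝ) (x : ℝ) : ℝ :=
  ∑ i ∈ Finset.range (n + 1), lam i * max (x - K i) 0

/-- `μ` is meant to be the normalising constant `∫₀^∞ exp (exponent n K lam x) dx`. -/
noncomputable def density (n : ℕ) (K lam : ℕ → ℝ) (μ x : ℝ) : ℝ :=
  μ⁻¹ * exp (exponent n K lam x)

theorem density_pos {n : ℕ} {K lam : ℕ → ℝ} {μ : ℝ} (hμ : 0 < μ) (x : ℝ) :
    0 < density n K lam μ x := by
  unfold density
  positivity

theorem continuous_exponent (n : ℕ) (K lam : ℕ → ℝ) : Continuous (exponent n K lam) := by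
  unfold exponent
  fun_prop

theorem abs_max_sub_zero_sub_le {x : ℝ} (hx : 0 ≤ x) (k : ℝ) : |max (x - k) 0 - x| ≤ |k| := by
  simpa [max_eq_left hx] using abs_max_sub_max_le_abs (x - k) x 0

theorem mul_max_sub_zero_le {x : ℝ} (hx : 0 ≤ x) (l k : ℝ) :
    l * max (x - k) 0 ≤ l * x + |l| * |k| := by
  have h := mul_le_mul_of_nonneg_left (abs_max_sub_zero_sub_le hx k) (abs_nonneg l)
  rw [← abs_mul] at h
  linarith [le_abs_self (l * (max (x - k) 0 - x))]

theorem exponent_le {x : ℝ} (hx : 0 ≤ x) (n : ℕ) (K lam : ℕ → ℝ) :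
    exponent n K lam x ≤
      (∑ i ∈ Finset.range (n + 1), lam i) * x + ∑ i ∈ Finset.range (n + 1), |lam i| * |K i| := by
  rw [Finset.sum_mul, ← Finset.sum_add_distrib]
  exact Finset.sum_le_sum fun i _ => mul_max_sub_zero_le hx (lam i) (K i)

theorem integrableOn_exp_exponent {n : ℕ} {K lam : ℕ → ℝ}
    (hlam : ∑ i ∈ Finset.range (n + 1), lam i < 0) :
    IntegrableOn (fun x => exp (exponent n K lam x)) (Set.Ici 0) := by
  set a := ∑ i ∈ Finset.range (n + 1), lam i
  set C := ∑ i ∈ Finset.range (n + 1), |lam i| * |K i|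
  have hdom : IntegrableOn (fun x => exp C * exp (a * x)) (Set.Ici 0) := by
    rw [integrableOn_Ici_iff_integrableOn_Ioi]
    exact (integrableOn_exp_mul_Ioi hlam 0).const_mul _
  refine hdom.mono' ((continuous_exponent n K lam).rexp.aestronglyMeasurable) ?_
  filter_upwards [self_mem_ae_restrict measurableSet_Ici] with x hx
  rw [norm_of_nonneg (exp_pos _).le, ← exp_add]
  exact exp_le_exp.mpr (by linarith [exponent_le (Set.mem_Ici.mp hx) n K lam])

theorem setIntegral_exp_exponent_pos {n : ℕ} {K lam : ℕ → ℝ}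
    (hlam : ∑ i ∈ Finset.range (n + 1), lam i < 0) :
    0 < ∫ x in Set.Ici (0 : ℝ), exp (exponent n K lam x) :=
  have : NeZero (volume (Set.Ici (0 : ℝ))) := ⟨by simp⟩
  integral_exp_pos (integrableOn_exp_exponent hlam)

section CrossEntropy

variable {n : ℕ} {K lam : ℕ → ℝ} {ν : Measure ℝ} {f : ℝ → ℝ}

theorem mul_exponent_eq_sum (x : ℝ) :
    f x * exponent n K lam x = ∑ i ∈ Finset.range (n + 1), lam i * (max (x - K i) 0 * f x) := by
  rw [exponent, Finset.mul_sum]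
  exact Finset.sum_congr rfl fun i _ => by ring

theorem integrable_mul_exponent
    (hcall : ∀ i ≤ n, Integrable (fun x => max (x - K i) 0 * f x) ν) :
    Integrable (fun x => f x * exponent n K lam x) ν := by
  simp_rw [mul_exponent_eq_sum]
  exact integrable_finsetSum _ fun i hi =>
    (hcall i (Finset.mem_range_succ_iff.mp hi)).const_mul (lam i)

theorem integral_mul_exponent
    (hcall : ∀ i ≤ n, Integrable (fun x => max (x - K i) 0 * f x) ν) :
    ∫ x, f x * exponent n K lam x ∂ν =
      ∑ i ∈ Finset.range (n + 1), lam i * ∫ x, max (x - K i) 0 * f x ∂ν := by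
  simp_rw [mul_exponent_eq_sum]
  rw [integral_finsetSum _ fun i hi =>
    (hcall i (Finset.mem_range_succ_iff.mp hi)).const_mul (lam i)]
  simp_rw [integral_const_mul]

variable {μ : ℝ}

theorem log_density (hμ : μ ≠ 0) (x : ℝ) :
    log (density n K lam μ x) = -log μ + exponent n K lam x := by
  rw [density, log_mul (inv_ne_zero hμ) (exp_pos _).ne', log_inv, log_exp]

theorem integrable_mul_log_density (hμ : μ ≠ 0) (hf : Integrable f ν)
    (hcall : ∀ i ≤ n, Integrable (fun x => max (x - K i) 0 * f x) ν) :
    Integrable (fun x => f x * log (density n K lam μ x)) ν := by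
  simp_rw [log_density hμ, mul_add]
  exact (hf.mul_const _).add (integrable_mul_exponent hcall)

theorem integral_mul_log_density (hμ : μ ≠ 0) (hf : Integrable f ν)
    (hcall : ∀ i ≤ n, Integrable (fun x => max (x - K i) 0 * f x) ν) :
    ∫ x, f x * log (density n K lam μ x) ∂ν =
      (∫ x, f x ∂ν) * -log μ +
        ∑ i ∈ Finset.range (n + 1), lam i * ∫ x, max (x - K i) 0 * f x ∂ν := by
  simp_rw [log_density hμ, mul_add]
  rw [integral_add (hf.mul_const _) (integrable_mul_exponent hcall), integral_mul_const,
    integral_mul_exponent hcall]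

end CrossEntropy

end BuchenKelly

theorem integral_mul_log_div {α : Type*} [MeasurableSpace α] {ν : Measure α} {g h : α → ℝ}
    (hh : ∀ x, h x ≠ 0) (hg : Integrable (fun x => g x * log (g x)) ν)
    (hgh : Integrable (fun x => g x * log (h x)) ν) :
    ∫ x, g x * log (g x / h x) ∂ν = ∫ x, g x * log (g x) ∂ν - ∫ x, g x * log (h x) ∂ν := by
  rw [← integral_sub hg hgh]
  congr 1 with x
  rcases eq_or_ne (g x) 0 with hgx | hgx
  · simp [hgx]
  · rw [log_div hgx (hh x), mul_sub]

open BuchenKelly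

theorem stmt_17_general (n : ℕ) (K : ℕ → ℝ)
    (lam : ℕ → ℝ) (hlam : ∑ i ∈ Finset.range (n + 1), lam i < 0)
    (μ : ℝ)
    (hμ : μ = ∫ x in Set.Ici (0 : ℝ),
      Real.exp (∑ i ∈ Finset.range (n + 1), lam i * max (x - K i) 0))
    (ghat g : ℝ → ℝ)
    (hghat : ∀ x, ghat x =
      μ⁻¹ * Real.exp (∑ i ∈ Finset.range (n + 1), lam i * max (x - K i) 0))
    (hgint : IntegrableOn g (Set.Ici 0))
    (hgnorm : ∫ x in Set.Ici (0 : ℝ), g x = 1)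
    -- the call-price constraints (with integrability of the payoffs)
    (hcallintg : ∀ i ≤ n, IntegrableOn (fun x => max (x - K i) 0 * g x) (Set.Ici 0))
    (hcallintgh : ∀ i ≤ n, IntegrableOn (fun x => max (x - K i) 0 * ghat x) (Set.Ici 0))
    (hmatch : ∀ i ≤ n,
      ∫ x in Set.Ici (0 : ℝ), max (x - K i) 0 * g x =
        ∫ x in Set.Ici (0 : ℝ), max (x - K i) 0 * ghat x)
    -- finiteness of the entropies and of the relative entropy
    (hentg : IntegrableOn (fun x => g x * Real.log (g x)) (Set.Ici 0)) :
    ∫ x in Set.Ici (0 : ℝ), g x * Real.log (g x / ghat x) =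
      (-∫ x in Set.Ici (0 : ℝ), ghat x * Real.log (ghat x)) -
        (-∫ x in Set.Ici (0 : ℝ), g x * Real.log (g x)) := by
  have hμpos : 0 < μ := hμ ▸ setIntegral_exp_exponent_pos hlam
  obtain rfl : ghat = density n K lam μ := funext hghat
  have hghat_int : IntegrableOn (density n K lam μ) (Set.Ici 0) :=
    (integrableOn_exp_exponent hlam).const_mul _
  have hghat_norm : ∫ x in Set.Ici (0 : ℝ), density n K lam μ x = 1 := by
    unfold density exponent
    rw [integral_const_mul, ← hμ, inv_mul_cancel₀ hμpos.ne']
  have hcross : ∫ x in Set.Ici (0 : ℝ), g x * Real.log (density n K lam μ x) =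
      ∫ x in Set.Ici (0 : ℝ), density n K lam μ x * Real.log (density n K lam μ x) := by
    rw [integral_mul_log_density hμpos.ne' hgint hcallintg,
      integral_mul_log_density hμpos.ne' hghat_int hcallintgh, hgnorm, hghat_norm]
    exact congrArg _ (Finset.sum_congr rfl fun i hi => by
      rw [hmatch i (Finset.mem_range_succ_iff.mp hi)])
  rw [integral_mul_log_div (fun x => (density_pos hμpos x).ne') hentg
    (integrable_mul_log_density hμpos.ne' hgint hcallintg), hcross]
  ring

/-- For a Buchen–Kelly density `ĝ` and any strictly positive density `g`
matching the same call prices, the relative entropy equals the entropy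
difference: `I(g‖ĝ) = H(ĝ) - H(g)`. -/
theorem stmt_17 (n : ℕ) (K : ℕ → ℝ) (hK0 : K 0 = 0)
    (hKmono : ∀ i < n, K i < K (i + 1))
    (lam : ℕ → ℝ) (hlam : ∑ i ∈ Finset.range (n + 1), lam i < 0)
    (μ : ℝ)
    (hμ : μ = ∫ x in Set.Ici (0 : ℝ),
      Real.exp (∑ i ∈ Finset.range (n + 1), lam i * max (x - K i) 0))
    (ghat g : ℝ → ℝ)
    (hghat : ∀ x, ghat x =
      μ⁻¹ * Real.exp (∑ i ∈ Finset.range (n + 1), lam i * max (x - K i) 0))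
    (hgpos : ∀ x ∈ Set.Ici (0 : ℝ), 0 < g x)
    (hgint : IntegrableOn g (Set.Ici 0))
    (hgnorm : ∫ x in Set.Ici (0 : ℝ), g x = 1)
    -- the call-price constraints (with integrability of the payoffs)
    (hcallintg : ∀ i ≤ n, IntegrableOn (fun x => max (x - K i) 0 * g x) (Set.Ici 0))
    (hcallintgh : ∀ i ≤ n, IntegrableOn (fun x => max (x - K i) 0 * ghat x) (Set.Ici 0))
    (hmatch : ∀ i ≤ n,
      ∫ x in Set.Ici (0 : ℝ), max (x - K i) 0 * g x =
        ∫ x in Set.Ici (0 : ℝ), max (x - K i) 0 * ghat x)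
    -- finiteness of the entropies and of the relative entropy
    (hentg : IntegrableOn (fun x => g x * Real.log (g x)) (Set.Ici 0))
    (hentgh : IntegrableOn (fun x => ghat x * Real.log (ghat x)) (Set.Ici 0))
    (hrel : IntegrableOn (fun x => g x * Real.log (g x / ghat x)) (Set.Ici 0)) :
    ∫ x in Set.Ici (0 : ℝ), g x * Real.log (g x / ghat x) =
      (-∫ x in Set.Ici (0 : ℝ), ghat x * Real.log (ghat x)) -
        (-∫ x in Set.Ici (0 : ℝ), g x * Real.log (g x)) :=
  stmt_17_general n K lam hlam μ hμ ghat g hghat hgint hgnorm hcallintg hcallintgh hmatch hentg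
end
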